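/- There is a ℂ-algebra isomorphism ℂ[y₁,y₂,y₃]/(4y₁³ + y₃², 2y₂y₃, y₂² + 2y₁y₃) ≅ ℂ[u,v,w]/(w² + 4u³, wv, v² - 8uw) sending y₁ ↦ u, y₂ ↦ (i/2)v, y₃ ↦ w. -/

import Mathlib

open MvPolynomial Complex

noncomputable section

abbrev R3 : Type := MvPolynomial (Fin 3) ℂ

/-- The Jacobian ideal of the `S₁₁` polynomial `x⁴ + y²z + xz²`. -/
def J10a : Ideal R3 :=
  Ideal.span {4 * X 0 ^ 3 + X 2 ^ 2, 2 * X 1 * X 2, X 1 ^ 2 + 2 * X 0 * X 2}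

/-- Presentation of the orbifold Jacobian algebra `Jac(x⁴ + xy⁴ + z², ℤ/2ℤ)`:
relations `w² + 4u³`, `wv`, `v² - 8uw` in variables `u = X 0`, `v = X 1`,
`w = X 2`. -/
def J10b : Ideal R3 :=
  Ideal.span {X 2 ^ 2 + 4 * X 0 ^ 3, X 2 * X 1, X 1 ^ 2 - 8 * X 0 * X 2}

/-! Rescaling `y₂ ↦ (i/2) y₂` is an automorphism of `ℂ[y₁,y₂,y₃]`. Since `4 (i/2)² = -1`, it sends
the three generators of the first ideal to unit multiples of the three generators of the second,
so it maps one ideal onto the other and descends to an isomorphism of the quotients. -/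

namespace MvPolynomial

variable {σ R : Type*} [CommSemiring R]

def scaleVars (c : σ → Rˣ) : MvPolynomial σ R ≃ₐ[R] MvPolynomial σ R :=
  AlgEquiv.ofAlgHom (aeval fun i => C (c i : R) * X i)
    (aeval fun i => C (((c i)⁻¹ : Rˣ) : R) * X i)
    (algHom_ext fun i => by
      simp only [AlgHom.comp_apply, aeval_X, map_mul, aeval_C, algebraMap_eq, AlgHom.coe_id, id_eq]
      rw [← mul_assoc, ← map_mul, Units.inv_mul, map_one, one_mul])
    (algHom_ext fun i => by
      simp only [AlgHom.comp_apply, aeval_X, map_mul, aeval_C, algebraMap_eq, AlgHom.coe_id, id_eq]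
      rw [← mul_assoc, ← map_mul, Units.mul_inv, map_one, one_mul])

@[simp]
theorem scaleVars_X (c : σ → Rˣ) (i : σ) : scaleVars c (X i) = C (c i : R) * X i := by
  simp [scaleVars]

end MvPolynomial

theorem Associated.of_mul_isUnit_eq {M : Type*} [Monoid M] {a b u : M} (hu : IsUnit u)
    (h : a * u = b) : Associated a b :=
  ⟨hu.unit, h⟩

namespace Ideal

variable {α : Type*} [CommSemiring α]

theorem span_singleton_eq_of_associated {x y : α} (h : Associated x y) :
    span ({x} : Set α) = span {y} := by
  obtain ⟨u, rfl⟩ := h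
  exact (span_singleton_mul_right_unit u.isUnit x).symm

theorem span_triple_eq_of_associated {a b c a' b' c' : α} (ha : Associated a a')
    (hb : Associated b b') (hc : Associated c c') : span {a, b, c} = span {a', b', c'} := by
  simp only [span_insert, span_singleton_eq_of_associated ha, span_singleton_eq_of_associated hb,
    span_singleton_eq_of_associated hc]

end Ideal

abbrev scaleX1 : R3 ≃ₐ[ℂ] R3 :=
  scaleVars ![1, Units.mk0 (I / 2) (div_ne_zero I_ne_zero two_ne_zero), 1]

theorem scaleX1_X0 : scaleX1 (X 0) = X 0 := by simp
theorem scaleX1_X1 : scaleX1 (X 1) = C (I / 2) * X 1 := by simp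
theorem scaleX1_X2 : scaleX1 (X 2) = X 2 := by simp

theorem J10a_map_scaleX1 : J10a.map (scaleX1 : R3 →+* R3) = J10b := by
  set t : R3 := C (I / 2)
  have ht : 4 * t ^ 2 = -1 := by
    have : (4 * (I / 2) ^ 2 : ℂ) = -1 := by ring_nf; simp
    rw [show (4 : R3) = C 4 from (map_ofNat C 4).symm, ← map_pow, ← map_mul, this, map_neg,
      map_one]
  have hu₂ : IsUnit (-2 * t) := IsUnit.of_mul_eq_one (2 * t) (by linear_combination -ht)
  have hu₃ : IsUnit (-4 : R3) := IsUnit.of_mul_eq_one (t ^ 2) (by linear_combination -ht)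
  rw [J10a, J10b, Ideal.map_span, Set.image_insert_eq, Set.image_insert_eq, Set.image_singleton]
  apply Ideal.span_triple_eq_of_associated
  · refine .of_eq ?_
    simp only [RingHom.coe_coe, map_add, map_mul, map_pow, map_ofNat, scaleX1_X0, scaleX1_X2]
    ring
  · refine .of_mul_isUnit_eq hu₂ ?_
    simp only [RingHom.coe_coe, map_mul, map_ofNat, scaleX1_X1, scaleX1_X2]
    linear_combination (-X 1 * X 2) * ht
  · refine .of_mul_isUnit_eq hu₃ ?_
    simp only [RingHom.coe_coe, map_add, map_mul, map_pow, map_ofNat, scaleX1_X0, scaleX1_X1,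
      scaleX1_X2]
    linear_combination (-X 1 ^ 2) * ht

/-- There is a `ℂ`-algebra isomorphism
`ℂ[y₁,y₂,y₃]/(4y₁³+y₃², 2y₂y₃, y₂²+2y₁y₃) ≅ ℂ[u,v,w]/(w²+4u³, wv, v²-8uw)`
sending `y₁ ↦ u`, `y₂ ↦ (i/2)v`, `y₃ ↦ w`. -/
theorem stmt10 :
    ∃ e : (R3 ⧸ J10a) ≃ₐ[ℂ] (R3 ⧸ J10b),
      e (Ideal.Quotient.mk J10a (X 0)) = Ideal.Quotient.mk J10b (X 0) ∧
      e (Ideal.Quotient.mk J10a (X 1)) = (I / 2) • Ideal.Quotient.mk J10b (X 1) ∧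
      e (Ideal.Quotient.mk J10a (X 2)) = Ideal.Quotient.mk J10b (X 2) := by
  refine ⟨Ideal.quotientEquivAlg J10a J10b scaleX1 J10a_map_scaleX1.symm, ?_, ?_, ?_⟩
  · rw [Ideal.quotientEquivAlg_mk, scaleX1_X0]
  · rw [Ideal.quotientEquivAlg_mk, scaleX1_X1, ← smul_eq_C_mul, ← Ideal.Quotient.mkₐ_eq_mk ℂ,
      map_smul]
  · rw [Ideal.quotientEquivAlg_mk, scaleX1_X2]
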